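/- arXiv:1505.02926 — 2 statements merged into one kernel-verified Lean document; each statement's English description precedes it below -/
import Mathlib

section
/- Let f : [a,b] → ℝ be càdlàg and g : [a,b] → ℝ be of bounded variation. Then the deterministic forward integral satisfies the integration by parts formula: ∫_{[a,b]} g(s) d⁻f(s) = g(b)f(b) − ∫_{]a,b]} f(s) dg(s), whenever the forward integral exists. -/
/-!
Shifting `s ↦ s - ε` turns the difference quotient into `ε⁻¹ ∫ (g_J(s - ε) - g_J(s)) f_{J̄}(s) ds`.
With `g = g₁ - g₂` on `[a, b]`, the increment `g_J(s - ε) - g_J(s)` is `-dg((s - ε, s] ∩ (a, b])`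
plus the jump `g(b)` on `(b, b + ε]`. By Fubini the measure part equals
`∫_{(a,b]} ε⁻¹ ∫_t^{t+ε} f_{J̄} ds dg(t)`, which tends to `∫_{(a,b]} f dg` by right-continuity and
dominated convergence (a càdlàg function is bounded), while the jump part is `g(b) f(b)`.
-/

open MeasureTheory Filter Topology Set

theorem measurable_of_continuousWithinAt_Ici {α β : Type*} [TopologicalSpace α]
    [MeasurableSpace α] [BorelSpace α] [LinearOrder α] [OrderTopology α]
    [SecondCountableTopology α] [TopologicalSpace β] [MeasurableSpace β] [BorelSpace β]
    {F : α → β} (hF : ∀ x, ContinuousWithinAt F (Ici x) x) : Measurable F :=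
  measurable_of_isOpen fun _ hU => .of_mem_nhdsGT fun x hx =>
    nhdsWithin_mono x Ioi_subset_Ici_self ((hF x).preimage_mem_nhdsWithin (hU.mem_nhds hx))

theorem isBounded_image_of_tendsto_nhdsLT_nhdsGE {α E : Type*} [TopologicalSpace α]
    [LinearOrder α] [OrderTopology α] [PseudoMetricSpace E] {F : α → E}
    (hl : ∀ x, ∃ y, Tendsto F (𝓝[<] x) (𝓝 y)) (hr : ∀ x, ∃ y, Tendsto F (𝓝[≥] x) (𝓝 y))
    {K : Set α} (hK : IsCompact K) : Bornology.IsBounded (F '' K) := by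
  refine Bornology.isBounded_image_of_isLocallyBounded_of_isCompact hK fun x => ?_
  obtain ⟨s, hs, hsb⟩ := Metric.exists_isBounded_image_of_tendsto (hl x).choose_spec
  obtain ⟨t, ht, htb⟩ := Metric.exists_isBounded_image_of_tendsto (hr x).choose_spec
  refine ⟨s ∪ t, ?_, image_union F s t ▸ hsb.union htb⟩
  rw [← nhdsLT_sup_nhdsGE]
  exact union_mem_sup hs ht

theorem integrable_of_norm_le_of_eq_zero_outside_Icc {E : Type*} [NormedAddCommGroup E]
    {μ : Measure ℝ} [IsLocallyFiniteMeasure μ] {h : ℝ → E} (hm : AEStronglyMeasurable h μ)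
    {C : ℝ} (hC : ∀ x, ‖h x‖ ≤ C) {l u : ℝ} (h0 : ∀ x ∉ Icc l u, h x = 0) : Integrable h μ :=
  IntegrableOn.integrable_of_forall_notMem_eq_zero
    (IntegrableOn.of_bound measure_Icc_lt_top hm.restrict C (ae_of_all _ hC)) h0

theorem tendsto_intervalIntegral_div_of_continuousWithinAt_Ici {F : ℝ → ℝ} {x : ℝ}
    (hmeas : StronglyMeasurableAtFilter F (𝓝[>] x))
    (hx : ContinuousWithinAt F (Ici x) x) :
    Tendsto (fun ε => (∫ s in x..x + ε, F s) / ε) (𝓝[>] 0) (𝓝 (F x)) := by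
  have hd : HasDerivWithinAt (fun u => ∫ s in x..u, F s) (F x) (Ici x) x :=
    intervalIntegral.integral_hasDerivWithinAt_right .refl hmeas (hx.mono Ioi_subset_Ici_self)
  rw [← hasDerivWithinAt_Ioi_iff_Ici, hasDerivWithinAt_iff_tendsto_slope' self_notMem_Ioi] at hd
  have hshift : Tendsto (fun ε : ℝ => x + ε) (𝓝[>] 0) (𝓝[>] x) := by
    refine tendsto_nhdsWithin_iff.2 ⟨?_, eventually_nhdsWithin_of_forall fun ε (hε : 0 < ε) =>
      lt_add_of_pos_right x hε⟩
    exact ((continuous_const_add x).tendsto' 0 x (add_zero x)).mono_left nhdsWithin_le_nhds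
  refine (hd.comp hshift).congr fun ε => ?_
  simp [slope_def_field]

theorem tendsto_integral_intervalIntegral_div {ν : Measure ℝ} [IsFiniteMeasure ν] {F : ℝ → ℝ}
    {M : ℝ} (hM : ∀ s, ‖F s‖ ≤ M) (hF : ∀ x, ContinuousWithinAt F (Ici x) x) :
    Tendsto (fun ε => (∫ t, (∫ s in t..t + ε, F s) ∂ν) / ε) (𝓝[>] 0) (𝓝 (∫ t, F t ∂ν)) := by
  have hmeas := measurable_of_continuousWithinAt_Ici hF
  have hint : ∀ u v, IntervalIntegrable F volume u v := fun u v =>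
    intervalIntegrable_const.mono_fun' hmeas.aestronglyMeasurable (ae_of_all _ hM)
  have hcont : ∀ ε, Continuous fun t => ∫ s in t..t + ε, F s := fun ε => by
    have hΦ := intervalIntegral.continuous_primitive hint 0
    refine ((hΦ.comp (continuous_add_const ε)).sub hΦ).congr fun t => ?_
    exact intervalIntegral.integral_interval_sub_left (hint 0 (t + ε)) (hint 0 t)
  have hlim : Tendsto (fun ε => ∫ t, (∫ s in t..t + ε, F s) / ε ∂ν) (𝓝[>] 0)
      (𝓝 (∫ t, F t ∂ν)) := by
    refine tendsto_integral_filter_of_dominated_convergence (fun _ => M)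
      (Eventually.of_forall fun ε => ((hcont ε).div_const ε).aestronglyMeasurable) ?_
      (integrable_const M) (ae_of_all _ fun t =>
        tendsto_intervalIntegral_div_of_continuousWithinAt_Ici
          hmeas.stronglyMeasurable.stronglyMeasurableAtFilter (hF t))
    filter_upwards [self_mem_nhdsWithin] with ε (hε : 0 < ε)
    refine ae_of_all _ fun t => ?_
    have := intervalIntegral.norm_integral_le_of_norm_le_const (a := t) (b := t + ε)
      (fun s _ => hM s)
    rw [add_sub_cancel_left, abs_of_pos hε] at this
    rw [norm_div, Real.norm_of_nonneg hε.le, div_le_iff₀ hε]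
    exact this
  exact hlim.congr fun ε => integral_div ε _

section Window

variable {ν : Measure ℝ} [IsFiniteMeasure ν] {F : ℝ → ℝ} {M : ℝ}

theorem integrable_mul_indicator_Ioc_sub (hF : Measurable F) (hM : ∀ s, ‖F s‖ ≤ M) (ε : ℝ) :
    Integrable (fun p : ℝ × ℝ => F p.1 * (Ioc (p.1 - ε) p.1).indicator 1 p.2)
      (volume.prod ν) := by
  set E : Set (ℝ × ℝ) := {p | p.2 ∈ Ioc (p.1 - ε) p.1}
  have hE : MeasurableSet E :=
    (measurableSet_lt (measurable_fst.sub_const ε) measurable_snd).inter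
      (measurableSet_le measurable_snd measurable_fst)
  have hfin : volume.prod ν E ≠ ⊤ := by
    have hsec : ∀ t, (fun s => (s, t)) ⁻¹' E = Ico t (t + ε) := fun t => by
      ext s; simp only [E, mem_preimage, mem_ofPred_eq, mem_Ioc, mem_Ico]; constructor <;>
        rintro ⟨h₁, h₂⟩ <;> constructor <;> linarith
    simp [Measure.prod_apply_symm hE, hsec, ENNReal.mul_eq_top]
  refine Integrable.mono' ((integrable_indicator_iff hE).2 (integrableOn_const hfin (C := M)))
    ((hF.comp measurable_fst).mul (measurable_const.indicator hE)).aestronglyMeasurable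
    (ae_of_all _ fun p => ?_)
  change ‖F p.1 * E.indicator 1 p‖ ≤ E.indicator (fun _ => M) p
  by_cases hp : p ∈ E
  · simpa [hp] using hM p.1
  · simp [hp]

theorem integrable_mul_measureReal_Ioc_sub (hF : Measurable F) (hM : ∀ s, ‖F s‖ ≤ M) (ε : ℝ) :
    Integrable (fun s => F s * ν.real (Ioc (s - ε) s)) := by
  simpa [integral_const_mul] using (integrable_mul_indicator_Ioc_sub hF hM ε).integral_prod_left

theorem integral_mul_measureReal_Ioc_sub (hF : Measurable F) (hM : ∀ s, ‖F s‖ ≤ M) {ε : ℝ}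
    (hε : 0 ≤ ε) :
    ∫ s, F s * ν.real (Ioc (s - ε) s) = ∫ t, (∫ s in t..t + ε, F s) ∂ν := by
  have hswap := integral_integral_swap (f := fun s t => F s * (Ioc (s - ε) s).indicator 1 t)
    (integrable_mul_indicator_Ioc_sub (ν := ν) hF hM ε)
  simp only [integral_const_mul, integral_indicator_one measurableSet_Ioc] at hswap
  rw [hswap]
  congr 1 with t
  rw [intervalIntegral.integral_of_le (by linarith), ← integral_Ico_eq_integral_Ioc,
    ← integral_indicator measurableSet_Ico]
  congr 1 with s
  by_cases hs : s ∈ Ico t (t + ε)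
  · have : t ∈ Ioc (s - ε) s := ⟨by linarith [hs.2], hs.1⟩
    simp [hs, this]
  · have : t ∉ Ioc (s - ε) s := fun h => hs ⟨h.2, by linarith [h.1]⟩
    simp [hs, this]

end Window

theorem Ioc_projIcc {a b : ℝ} (hab : a ≤ b) (x y : ℝ) :
    Ioc (projIcc a b hab x : ℝ) (projIcc a b hab y) = Ioc x y ∩ Ioc a b := by
  ext t
  simp only [coe_projIcc, mem_Ioc, mem_inter_iff, max_lt_iff, le_max_iff, le_min_iff, min_lt_iff]
  grind

theorem StieltjesFunction.measureReal_restrict_Ioc_Ioc (φ : StieltjesFunction ℝ) {a b : ℝ}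
    (hab : a ≤ b) {x y : ℝ} (hxy : x ≤ y) :
    (φ.measure.restrict (Ioc a b)).real (Ioc x y) =
      φ (projIcc a b hab y) - φ (projIcc a b hab x) := by
  rw [measureReal_restrict_apply measurableSet_Ioc, ← Ioc_projIcc hab, measureReal_def,
    φ.measure_Ioc, ENNReal.toReal_ofReal (sub_nonneg.2 (φ.mono (monotone_projIcc hab hxy)))]

/-- The extensions `f_{J̄}` and `g_J` of the paper are `zeroConstExtend a b f` and
`constZeroExtend a b g`. -/
noncomputable def zeroConstExtend (a b : ℝ) (f : ℝ → ℝ) (s : ℝ) : ℝ :=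
  if s < a then 0 else if s ≤ b then f s else f b

noncomputable def constZeroExtend (a b : ℝ) (g : ℝ → ℝ) (s : ℝ) : ℝ :=
  if s < a then g a else if s ≤ b then g s else 0

noncomputable def forwardIntegralApprox (a b : ℝ) (g f : ℝ → ℝ) (ε : ℝ) : ℝ :=
  ∫ s, constZeroExtend a b g s * (zeroConstExtend a b f (s + ε) - zeroConstExtend a b f s) / ε

section Extensions

variable {a b : ℝ} {f g fl : ℝ → ℝ} {s : ℝ}

theorem zeroConstExtend_of_lt_left (h : s < a) : zeroConstExtend a b f s = 0 := if_pos h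

theorem zeroConstExtend_of_mem_Icc (h : s ∈ Icc a b) : zeroConstExtend a b f s = f s := by
  simp [zeroConstExtend, not_lt.2 h.1, h.2]

theorem zeroConstExtend_of_right_le (hab : a ≤ b) (h : b ≤ s) : zeroConstExtend a b f s = f b := by
  rcases h.eq_or_lt with rfl | h
  · exact zeroConstExtend_of_mem_Icc ⟨hab, le_rfl⟩
  · simp [zeroConstExtend, not_lt.2 (hab.trans h.le), not_le.2 h]

theorem continuousWithinAt_Ici_zeroConstExtend (hab : a ≤ b)
    (hf : ∀ x ∈ Ico a b, Tendsto f (𝓝[≥] x) (𝓝 (f x))) (x : ℝ) :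
    ContinuousWithinAt (zeroConstExtend a b f) (Ici x) x := by
  rcases lt_or_ge x a with hxa | hxa
  · refine continuousWithinAt_const.congr_of_eventuallyEq ?_ (zeroConstExtend_of_lt_left hxa)
    filter_upwards [mem_nhdsWithin_of_mem_nhds (Iio_mem_nhds hxa)] with y hy
    exact zeroConstExtend_of_lt_left hy
  rcases lt_or_ge x b with hxb | hxb
  · refine ContinuousWithinAt.congr_of_eventuallyEq (hf x ⟨hxa, hxb⟩) ?_
      (zeroConstExtend_of_mem_Icc ⟨hxa, hxb.le⟩)
    filter_upwards [Ico_mem_nhdsGE hxb] with y hy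
    exact zeroConstExtend_of_mem_Icc ⟨hxa.trans hy.1, hy.2.le⟩
  · exact continuousWithinAt_const.congr
      (fun y hy => zeroConstExtend_of_right_le hab (hxb.trans hy))
      (zeroConstExtend_of_right_le hab hxb)

theorem exists_tendsto_nhdsLT_zeroConstExtend (hab : a ≤ b)
    (hf : ∀ x ∈ Ioc a b, Tendsto f (𝓝[<] x) (𝓝 (fl x))) (x : ℝ) :
    ∃ y, Tendsto (zeroConstExtend a b f) (𝓝[<] x) (𝓝 y) := by
  rcases le_or_gt x a with hxa | hxa
  · refine ⟨0, tendsto_const_nhds.congr' ?_⟩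
    filter_upwards [self_mem_nhdsWithin] with y (hy : y < x)
    exact (zeroConstExtend_of_lt_left (hy.trans_le hxa)).symm
  rcases le_or_gt x b with hxb | hxb
  · refine ⟨fl x, (hf x ⟨hxa, hxb⟩).congr' ?_⟩
    filter_upwards [Ioo_mem_nhdsLT hxa] with y hy
    exact (zeroConstExtend_of_mem_Icc ⟨hy.1.le, hy.2.le.trans hxb⟩).symm
  · refine ⟨f b, tendsto_const_nhds.congr' ?_⟩
    filter_upwards [mem_nhdsWithin_of_mem_nhds (Ioi_mem_nhds hxb)] with y (hy : b < y)
    exact (zeroConstExtend_of_right_le hab hy.le).symm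

theorem exists_norm_zeroConstExtend_le (hab : a ≤ b)
    (hf_rc : ∀ x ∈ Ico a b, Tendsto f (𝓝[≥] x) (𝓝 (f x)))
    (hf_ll : ∀ x ∈ Ioc a b, Tendsto f (𝓝[<] x) (𝓝 (fl x))) :
    ∃ M, ∀ s, ‖zeroConstExtend a b f s‖ ≤ M := by
  obtain ⟨M, hM⟩ := isBounded_iff_forall_norm_le.1 <| isBounded_image_of_tendsto_nhdsLT_nhdsGE
    (exists_tendsto_nhdsLT_zeroConstExtend hab hf_ll)
    (fun x => ⟨_, continuousWithinAt_Ici_zeroConstExtend hab hf_rc x⟩) isCompact_Icc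
  have hMmem : ∀ x ∈ Icc a b, ‖zeroConstExtend a b f x‖ ≤ M := fun x hx =>
    hM _ (mem_image_of_mem _ hx)
  refine ⟨M, fun s => ?_⟩
  rcases lt_or_ge s a with h | h
  · simpa [zeroConstExtend_of_lt_left h] using (norm_nonneg _).trans (hMmem a ⟨le_rfl, hab⟩)
  rcases le_or_gt s b with h' | h'
  · exact hMmem s ⟨h, h'⟩
  · rw [zeroConstExtend_of_right_le hab h'.le, ← zeroConstExtend_of_mem_Icc (f := f) ⟨hab, le_rfl⟩]
    exact hMmem b ⟨hab, le_rfl⟩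

theorem constZeroExtend_of_right_lt (hab : a ≤ b) (h : b < s) : constZeroExtend a b g s = 0 := by
  simp [constZeroExtend, not_lt.2 (hab.trans h.le), not_le.2 h]

theorem constZeroExtend_eq (hab : a ≤ b) (s : ℝ) :
    constZeroExtend a b g s = g (projIcc a b hab s) - (Ioi b).indicator (fun _ => g b) s := by
  unfold constZeroExtend
  split_ifs with h₁ h₂
  · simp [projIcc_of_le_left hab h₁.le, not_lt.2 (h₁.le.trans hab)]
  · simp [projIcc_of_mem hab ⟨not_lt.1 h₁, h₂⟩, h₂]
  · simp [projIcc_of_right_le hab (not_le.1 h₂).le, not_le.1 h₂]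

end Extensions

instance {μ : Measure ℝ} [IsLocallyFiniteMeasure μ] {a b : ℝ} :
    IsFiniteMeasure (μ.restrict (Ioc a b)) :=
  isFiniteMeasure_restrict.2 measure_Ioc_lt_top.ne

section BoundedVariation

variable {a b : ℝ} (hab : a ≤ b) {f g : ℝ → ℝ} {g₁ g₂ : StieltjesFunction ℝ}
  (hg : ∀ x ∈ Icc a b, g x = g₁ x - g₂ x)
include hab hg

theorem constZeroExtend_eq_sub (s : ℝ) :
    constZeroExtend a b g s = g₁ (projIcc a b hab s) - g₂ (projIcc a b hab s) -
      (Ioi b).indicator (fun _ => g b) s := by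
  rw [constZeroExtend_eq hab, hg _ (projIcc a b hab s).2]

theorem measurable_constZeroExtend : Measurable (constZeroExtend a b g) := by
  have hproj : Measurable fun s => (projIcc a b hab s : ℝ) :=
    (continuous_subtype_val.comp continuous_projIcc).measurable
  rw [funext (constZeroExtend_eq_sub hab hg)]
  exact ((g₁.mono.measurable.comp hproj).sub (g₂.mono.measurable.comp hproj)).sub
    (measurable_const.indicator measurableSet_Ioi)

theorem exists_norm_constZeroExtend_le : ∃ K, ∀ s, ‖constZeroExtend a b g s‖ ≤ K := by
  refine ⟨max |g₁ a| |g₁ b| + max |g₂ a| |g₂ b| + |g b|, fun s => ?_⟩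
  have hs := (projIcc a b hab s).2
  have h₁ := abs_le_max_abs_abs (g₁.mono hs.1) (g₁.mono hs.2)
  have h₂ := abs_le_max_abs_abs (g₂.mono hs.1) (g₂.mono hs.2)
  have h₃ : |(Ioi b).indicator (fun _ => g b) s| ≤ |g b| := by
    simpa only [Real.norm_eq_abs] using norm_indicator_le_norm_self (fun _ => g b) s
  rw [Real.norm_eq_abs, constZeroExtend_eq_sub hab hg]
  exact (abs_sub _ _).trans (add_le_add ((abs_sub _ _).trans (add_le_add h₁ h₂)) h₃)

theorem constZeroExtend_sub_constZeroExtend {ε : ℝ} (hε : 0 ≤ ε) (s : ℝ) :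
    constZeroExtend a b g (s - ε) - constZeroExtend a b g s =
      (g₂.measure.restrict (Ioc a b)).real (Ioc (s - ε) s) -
        (g₁.measure.restrict (Ioc a b)).real (Ioc (s - ε) s) +
        (Ioc b (b + ε)).indicator (fun _ => g b) s := by
  have hind : (Ioi b).indicator (fun _ => g b) s - (Ioi b).indicator (fun _ => g b) (s - ε) =
      (Ioc b (b + ε)).indicator (fun _ => g b) s := by
    simp only [indicator_apply, mem_Ioi, mem_Ioc]
    split_ifs <;> grind
  rw [constZeroExtend_eq_sub hab hg, constZeroExtend_eq_sub hab hg,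
    g₁.measureReal_restrict_Ioc_Ioc hab (sub_le_self s hε),
    g₂.measureReal_restrict_Ioc_Ioc hab (sub_le_self s hε)]
  linear_combination hind

theorem constZeroExtend_sub_mul_zeroConstExtend {ε : ℝ} (hε : 0 ≤ ε) (s : ℝ) :
    (constZeroExtend a b g (s - ε) - constZeroExtend a b g s) * zeroConstExtend a b f s =
      zeroConstExtend a b f s * (g₂.measure.restrict (Ioc a b)).real (Ioc (s - ε) s) -
        zeroConstExtend a b f s * (g₁.measure.restrict (Ioc a b)).real (Ioc (s - ε) s) +
        (Ioc b (b + ε)).indicator (fun _ => g b * f b) s := by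
  rw [constZeroExtend_sub_constZeroExtend hab hg hε]
  by_cases hs : s ∈ Ioc b (b + ε)
  · simp only [indicator_of_mem hs, zeroConstExtend_of_right_le hab hs.1.le]
    ring
  · simp only [indicator_of_notMem hs]
    ring

end BoundedVariation

section ForwardIntegral

variable {a b : ℝ} (hab : a ≤ b) {f g : ℝ → ℝ} {g₁ g₂ : StieltjesFunction ℝ}
  (hg : ∀ x ∈ Icc a b, g x = g₁ x - g₂ x) (hFm : Measurable (zeroConstExtend a b f))
  {M : ℝ} (hM : ∀ s, ‖zeroConstExtend a b f s‖ ≤ M)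
include hab hg hFm hM

theorem integrable_constZeroExtend_mul_zeroConstExtend (δ : ℝ) :
    Integrable fun s => constZeroExtend a b g s * zeroConstExtend a b f (s + δ) := by
  obtain ⟨K, hK⟩ := exists_norm_constZeroExtend_le hab hg
  refine integrable_of_norm_le_of_eq_zero_outside_Icc (C := K * M) (l := a - δ) (u := b)
    ((measurable_constZeroExtend hab hg).mul
      (hFm.comp (measurable_add_const δ))).aestronglyMeasurable
    (fun s => ?_) (fun s hs => ?_)
  · rw [norm_mul]
    exact mul_le_mul (hK s) (hM _) (norm_nonneg _) ((norm_nonneg _).trans (hK s))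
  · rcases not_and_or.1 hs with h | h
    · rw [zeroConstExtend_of_lt_left (by linarith), mul_zero]
    · rw [constZeroExtend_of_right_lt hab (not_le.1 h), zero_mul]

theorem forwardIntegralApprox_eq {ε : ℝ} (hε : 0 < ε) :
    forwardIntegralApprox a b g f ε = g b * f b +
      ((∫ t, (∫ s in t..t + ε, zeroConstExtend a b f s) ∂g₂.measure.restrict (Ioc a b)) -
        ∫ t, (∫ s in t..t + ε, zeroConstExtend a b f s) ∂g₁.measure.restrict (Ioc a b)) / ε := by
  set F := zeroConstExtend a b f
  set G := constZeroExtend a b g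
  set ν₁ := g₁.measure.restrict (Ioc a b)
  set ν₂ := g₂.measure.restrict (Ioc a b)
  have hint := integrable_constZeroExtend_mul_zeroConstExtend hab hg hFm hM
  have hint₀ : Integrable fun s => G s * F s := by simpa using hint 0
  have hint₁ : Integrable fun s => G (s - ε) * F s := by simpa using (hint ε).comp_sub_right ε
  have hw₁ := integrable_mul_measureReal_Ioc_sub (ν := ν₁) hFm hM ε
  have hw₂ := integrable_mul_measureReal_Ioc_sub (ν := ν₂) hFm hM ε
  calc forwardIntegralApprox a b g f ε
      = ((∫ s, G s * F (s + ε)) - ∫ s, G s * F s) / ε := by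
        rw [← integral_sub (hint ε) hint₀, ← integral_div]
        simp only [forwardIntegralApprox, mul_sub, F, G]
    _ = (∫ s, (G (s - ε) - G s) * F s) / ε := by
        have hshift : ∫ s, G s * F (s + ε) = ∫ s, G (s - ε) * F s := by
          simpa using integral_add_right_eq_self (fun s => G (s - ε) * F s) ε
        rw [hshift, ← integral_sub hint₁ hint₀]
        simp only [sub_mul]
    _ = ((∫ t, (∫ s in t..t + ε, F s) ∂ν₂) - (∫ t, (∫ s in t..t + ε, F s) ∂ν₁) +
          ε * (g b * f b)) / ε := by
        rw [integral_congr_ae (ae_of_all _ (constZeroExtend_sub_mul_zeroConstExtend hab hg hε.le)),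
          integral_add (f := fun s => F s * ν₂.real (Ioc (s - ε) s) - F s * ν₁.real (Ioc (s - ε) s))
          (hw₂.sub hw₁)
          ((integrable_indicator_iff measurableSet_Ioc).2
            (integrableOn_const measure_Ioc_lt_top.ne)),
          integral_sub hw₂ hw₁, integral_mul_measureReal_Ioc_sub hFm hM hε.le,
          integral_mul_measureReal_Ioc_sub hFm hM hε.le,
          integral_indicator_const _ measurableSet_Ioc,
          Real.volume_real_Ioc_of_le (by linarith), add_sub_cancel_left, smul_eq_mul]
    _ = _ := by field_simp; ring

end ForwardIntegral

/-- Integration by parts for the forward integral: if `f` is càdlàg on `[a,b]`, `g` is of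
bounded variation (difference of Stieltjes functions on `[a,b]`), and the forward integral
`∫_{[a,b]} g d⁻f` exists (with value `L`), then `L = g(b)f(b) − ∫_{]a,b]} f(s) dg(s)`. -/
theorem stmt2 (a b : ℝ) (hab : a < b) (f fl g : ℝ → ℝ) (L : ℝ)
    (g₁ g₂ : StieltjesFunction ℝ)
    (hg : ∀ x ∈ Set.Icc a b, g x = g₁ x - g₂ x)
    (hf_rc : ∀ x ∈ Set.Ico a b, Tendsto f (𝓝[≥] x) (𝓝 (f x)))
    (hf_ll : ∀ x ∈ Set.Ioc a b, Tendsto f (𝓝[<] x) (𝓝 (fl x)))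
    (hlim : Tendsto
      (fun ε : ℝ => ∫ s : ℝ,
        (if s < a then g a else if s ≤ b then g s else 0) *
          ((if s + ε < a then 0 else if s + ε ≤ b then f (s + ε) else f b) -
            (if s < a then 0 else if s ≤ b then f s else f b)) / ε)
      (𝓝[>] 0) (𝓝 L)) :
    L = g b * f b -
      ((∫ s in Set.Ioc a b, f s ∂g₁.measure) - ∫ s in Set.Ioc a b, f s ∂g₂.measure) := by
  change Tendsto (forwardIntegralApprox a b g f) (𝓝[>] 0) (𝓝 L) at hlim
  obtain ⟨M, hM⟩ := exists_norm_zeroConstExtend_le hab.le hf_rc hf_ll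
  have hrc := continuousWithinAt_Ici_zeroConstExtend hab.le hf_rc
  have hFm := measurable_of_continuousWithinAt_Ici hrc
  have hF : ∀ φ : StieltjesFunction ℝ, ∫ t, zeroConstExtend a b f t ∂φ.measure.restrict (Ioc a b) =
      ∫ t in Ioc a b, f t ∂φ.measure := fun φ =>
    setIntegral_congr_fun measurableSet_Ioc fun t ht =>
      zeroConstExtend_of_mem_Icc (Ioc_subset_Icc_self ht)
  have hwindow :=
    (tendsto_integral_intervalIntegral_div (ν := g₂.measure.restrict (Ioc a b)) hM hrc).sub
      (tendsto_integral_intervalIntegral_div (ν := g₁.measure.restrict (Ioc a b)) hM hrc)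
  simp only [← sub_div] at hwindow
  have happrox := ((tendsto_const_nhds (x := g b * f b)).add hwindow).congr' <|
    eventually_nhdsWithin_of_forall fun ε hε => (forwardIntegralApprox_eq hab.le hg hFm hM hε).symm
  rw [tendsto_nhds_unique hlim happrox, hF, hF]
  ring
end

section
/- Let f : [a,b] → ℝ be càdlàg and g : [a,b] → ℝ be of bounded variation. Then the deterministic backward integral satisfies: ∫_{[a,b]} g(s) d⁺f(s) = g(b)f(b⁻) − ∫_{]a,b]} f(s⁻) dg(s). -/
open MeasureTheory Filter Topology Set

/-!
Write `F = f_{J̄}` and `G = g_J`. Shifting the variable in the second term turns the integral into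
`ε⁻¹ ∫ F(s) (G(s) - G(s + ε)) ds`. The increment `G(s + ε) - G(s)` is the `dg`-mass of
`]s, s + ε] ∩ ]a, b]`, except for the drop of `G` from `g b` to `0` after `b`, which contributes
`g b` on `]b - ε, b]`. By Fubini the first part is `-∫ ε⁻¹ ∫_{t-ε}^t F(s) ds dg(t)`; the left
averages of `F` tend to `f(t⁻)`, and dominated convergence applies since `F` is bounded. The
second part is `g b` times the left average of `F` at `b`, which tends to `g(b) f(b⁻)`.
-/

theorem measurable_of_tendsto_nhdsWithin_Ici {β : Type*} [TopologicalSpace β]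
    [TopologicalSpace.PseudoMetrizableSpace β] [MeasurableSpace β] [BorelSpace β] {F : ℝ → β}
    (hF : ∀ x, Tendsto F (𝓝[≥] x) (𝓝 (F x))) : Measurable F := by
  -- `F` is the pointwise limit of `F ∘ q n`, where `q n x ↓ x` takes countably many values.
  set q : ℕ → ℝ → ℝ := fun n x => ⌈x * (n + 1)⌉ / (n + 1) with hq
  have hpos : ∀ n : ℕ, (0 : ℝ) < n + 1 := fun n => by positivity
  have hq_ge : ∀ n x, x ≤ q n x := fun n x => by
    rw [hq, le_div_iff₀ (hpos n)]
    exact Int.le_ceil _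
  have hq_le : ∀ n x, q n x ≤ x + 1 / (n + 1) := fun n x => by
    rw [hq, div_le_iff₀ (hpos n), add_mul, one_div_mul_cancel (hpos n).ne']
    exact (Int.ceil_lt_add_one _).le
  have hq_lim : ∀ x, Tendsto (fun n => q n x) atTop (𝓝[≥] x) := fun x =>
    tendsto_nhdsWithin_of_tendsto_nhds_of_eventually_within _
      (tendsto_of_tendsto_of_tendsto_of_le_of_le tendsto_const_nhds
        (by simpa using tendsto_one_div_add_atTop_nhds_zero_nat.const_add x)
        (hq_ge · x) (hq_le · x))
      (Eventually.of_forall (hq_ge · x))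
  refine measurable_of_tendsto_metrizable (f := fun n x => F (q n x)) (fun n => ?_)
    (tendsto_pi_nhds.2 fun x => (hF x).comp (hq_lim x))
  exact (measurable_of_countable fun k : ℤ => F (k / ((n : ℝ) + 1))).comp
    (measurable_id.mul_const _).ceil

theorem exists_norm_le_of_tendsto_nhdsGE_nhdsLT {E : Type*} [SeminormedAddGroup E]
    {f fl : ℝ → E} {a b : ℝ} (hf_rc : ∀ x ∈ Ico a b, Tendsto f (𝓝[≥] x) (𝓝 (f x)))
    (hf_ll : ∀ x ∈ Ioc a b, Tendsto f (𝓝[<] x) (𝓝 (fl x))) :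
    ∃ M, ∀ x ∈ Icc a b, ‖f x‖ ≤ M := by
  refine isCompact_Icc.induction_on ⟨0, by simp⟩
    (fun s t hst ⟨M, hM⟩ => ⟨M, fun x hx => hM x (hst hx)⟩)
    (fun s t ⟨M, hM⟩ ⟨N, hN⟩ => ⟨max M N, fun x hx => hx.elim
      (fun h => (hM x h).trans (le_max_left _ _)) (fun h => (hN x h).trans (le_max_right _ _))⟩)
    fun x hx => ?_
  have hleft : ∀ᶠ y in 𝓝[Icc a b ∩ Iio x] x, ‖f y‖ < ‖fl x‖ + 1 := by
    rcases hx.1.eq_or_lt with rfl | hax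
    · exact eventually_nhdsWithin_of_forall fun y hy => absurd hy.2 (not_lt.2 hy.1.1)
    · exact ((hf_ll x ⟨hax, hx.2⟩).norm.eventually (gt_mem_nhds (lt_add_one _))).filter_mono
        (nhdsWithin_mono _ inter_subset_right)
  have hright : ∀ᶠ y in 𝓝[Icc a b ∩ Ici x] x, ‖f y‖ < ‖f x‖ + 1 := by
    rcases hx.2.eq_or_lt with rfl | hxb
    · exact eventually_nhdsWithin_of_forall fun y hy => by
        rw [le_antisymm hy.1.2 hy.2]; exact lt_add_one _
    · exact ((hf_rc x ⟨hx.1, hxb⟩).norm.eventually (gt_mem_nhds (lt_add_one _))).filter_mono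
        (nhdsWithin_mono _ inter_subset_right)
  refine ⟨{y | ‖f y‖ < max (‖fl x‖ + 1) (‖f x‖ + 1)}, ?_, _, fun y hy => le_of_lt hy⟩
  rw [← inter_univ (Icc a b), ← Iio_union_Ici (a := x), inter_union_distrib_left, nhdsWithin_union]
  exact ⟨hleft.mono fun y hy => lt_max_of_lt_left hy, hright.mono fun y hy => lt_max_of_lt_right hy⟩

theorem tendsto_intervalIntegral_sub_div_nhdsGT {F : ℝ → ℝ} {t L : ℝ}
    (hF_int : ∀ c d, IntervalIntegrable F volume c d)
    (hF_meas : StronglyMeasurableAtFilter F (𝓝[≤] t)) (hF : Tendsto F (𝓝[<] t) (𝓝 L)) :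
    Tendsto (fun ε => (∫ s in t - ε..t, F s) / ε) (𝓝[>] 0) (𝓝 L) := by
  have hae : 𝓝[≤] t ⊓ ae volume ≤ 𝓝[<] t := by
    rw [← Iic_sdiff_right, sdiff_eq, nhdsWithin_inter']
    exact inf_le_inf_left _ (le_principal_iff.2 (compl_mem_ae_iff.2 (measure_singleton t)))
  have hderiv : HasDerivWithinAt (fun u => ∫ s in (0 : ℝ)..u, F s) L (Iic t) t :=
    intervalIntegral.integral_hasDerivWithinAt_of_tendsto_ae_right (hF_int 0 t) hF_meas
      (hF.mono_left hae)
  have hshift : Tendsto (fun ε => t - ε) (𝓝[>] 0) (𝓝[Iic t \ {t}] t) := by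
    rw [Iic_sdiff_right]
    refine tendsto_nhdsWithin_of_tendsto_nhds_of_eventually_within _
      (((continuous_sub_left t).tendsto' 0 t (sub_zero t)).mono_left nhdsWithin_le_nhds) ?_
    filter_upwards [self_mem_nhdsWithin] with ε (hε : 0 < ε)
    exact sub_lt_self t hε
  refine ((hasDerivWithinAt_iff_tendsto_slope.1 hderiv).comp hshift).congr' ?_
  filter_upwards with ε
  rw [Function.comp_apply, slope_def_field, sub_sub_cancel_left, div_neg, ← neg_div, neg_sub,
    intervalIntegral.integral_interval_sub_left (hF_int 0 t) (hF_int 0 (t - ε))]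

theorem Measurable.intervalIntegrable_of_norm_le {F : ℝ → ℝ} {M : ℝ} (hF : Measurable F)
    (hM : ∀ s, ‖F s‖ ≤ M) (c d : ℝ) : IntervalIntegrable F volume c d :=
  intervalIntegrable_const.mono_fun hF.aestronglyMeasurable
    (ae_of_all _ fun s => (hM s).trans (Real.le_norm_self M))

theorem Measurable.integrable_of_norm_le_of_eqOn_compl_Icc {F : ℝ → ℝ} {M c d : ℝ}
    (hF : Measurable F) (hM : ∀ s, ‖F s‖ ≤ M) (h0 : EqOn F 0 (Icc c d)ᶜ) : Integrable F :=
  (integrableOn_iff_integrable_of_support_subset fun _ hs => by_contra fun h => hs (h0 h)).1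
    (Measure.integrableOn_of_bounded measure_Icc_lt_top.ne hF.aestronglyMeasurable
      (ae_of_all _ hM))

theorem integral_mul_sub_comp_sub {u v : ℝ → ℝ} (ε : ℝ) (h₁ : Integrable fun s => u s * v s)
    (h₂ : Integrable fun s => u s * v (s - ε)) :
    ∫ s, u s * (v s - v (s - ε)) = ∫ s, v s * (u s - u (s + ε)) := by
  have h₃ : Integrable fun s => v s * u (s + ε) := by
    simpa [mul_comm] using h₂.comp_add_right ε
  calc ∫ s, u s * (v s - v (s - ε))
      = (∫ s, u s * v s) - ∫ s, u s * v (s - ε) := by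
        simp_rw [mul_sub]; exact integral_sub h₁ h₂
    _ = (∫ s, v s * u s) - ∫ s, v s * u (s + ε) := by
        rw [← integral_add_right_eq_self (fun s => u s * v (s - ε)) ε]
        simp only [add_sub_cancel_right, mul_comm]
    _ = ∫ s, v s * (u s - u (s + ε)) := by
        simp_rw [mul_sub]; exact (integral_sub (by simpa [mul_comm] using h₁) h₃).symm

theorem Ioc_inter_Ioc_eq_Ioc_max_min (a b c d : ℝ) :
    Ioc c d ∩ Ioc a b = Ioc (max a (min c b)) (max a (min d b)) := by
  ext x
  simp only [mem_inter_iff, mem_Ioc, max_lt_iff, le_max_iff, le_min_iff, min_lt_iff]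
  grind

theorem StieltjesFunction.measureReal_restrict_Ioc (g : StieltjesFunction ℝ) (a b : ℝ)
    {c d : ℝ} (hcd : c ≤ d) :
    (g.measure.restrict (Ioc a b)).real (Ioc c d) = g (max a (min d b)) - g (max a (min c b)) := by
  rw [measureReal_restrict_apply measurableSet_Ioc, Ioc_inter_Ioc_eq_Ioc_max_min, measureReal_def,
    g.measure_Ioc, ENNReal.toReal_ofReal (sub_nonneg.2 (g.mono (by gcongr)))]

instance StieltjesFunction.isFiniteMeasure_restrict_Ioc (g : StieltjesFunction ℝ) (a b : ℝ) :
    IsFiniteMeasure (g.measure.restrict (Ioc a b)) :=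
  isFiniteMeasure_restrict.2 measure_Ioc_lt_top.ne

section MeasureAverages

variable {F : ℝ → ℝ} {M ε : ℝ} {ν : Measure ℝ} [IsFiniteMeasure ν]

theorem integrable_indicator_Ioc_fst (hF : Measurable F) (hM : ∀ s, ‖F s‖ ≤ M) :
    Integrable (fun p : ℝ × ℝ => (Ioc p.1 (p.1 + ε)).indicator (fun _ => F p.1) p.2)
      (volume.prod ν) := by
  set E : Set (ℝ × ℝ) := {p | p.1 < p.2 ∧ p.2 ≤ p.1 + ε}
  have hE : MeasurableSet E :=
    (measurableSet_lt measurable_fst measurable_snd).inter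
      (measurableSet_le measurable_snd (measurable_fst.add_const ε))
  have hE_fin : volume.prod ν E ≠ ⊤ := by
    have hslice : ∀ t, (fun s => (s, t)) ⁻¹' E = Ico (t - ε) t := fun t => by
      ext s; simp only [E, mem_preimage, mem_ofPred_eq, mem_Ico, sub_le_iff_le_add]; tauto
    simp only [Measure.prod_apply_symm hE, hslice, Real.volume_Ico, sub_sub_cancel,
      lintegral_const]
    exact ENNReal.mul_ne_top ENNReal.ofReal_ne_top (measure_ne_top ν univ)
  have hF_on : IntegrableOn (fun p : ℝ × ℝ => F p.1) E (volume.prod ν) :=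
    Measure.integrableOn_of_bounded hE_fin (hF.comp measurable_fst).aestronglyMeasurable
      (ae_of_all _ fun p => hM p.1)
  exact (hF_on.integrable_indicator hE).congr (ae_of_all _ fun p => rfl)

theorem integrable_mul_measureReal_Ioc (hF : Measurable F) (hM : ∀ s, ‖F s‖ ≤ M) :
    Integrable (fun s => F s * ν.real (Ioc s (s + ε))) := by
  refine (integrable_indicator_Ioc_fst (ε := ε) (ν := ν) hF hM).integral_prod_left.congr
    (ae_of_all _ fun s => ?_)
  simp only [integral_indicator_const _ measurableSet_Ioc, smul_eq_mul, mul_comm]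

theorem integral_mul_measureReal_Ioc (hF : Measurable F) (hM : ∀ s, ‖F s‖ ≤ M) (hε : 0 ≤ ε) :
    ∫ s, F s * ν.real (Ioc s (s + ε)) = ∫ t, (∫ s in t - ε..t, F s) ∂ν := by
  have hslice : ∀ t, (fun s => (Ioc s (s + ε)).indicator (fun _ => F s) t) =
      (Ico (t - ε) t).indicator F := fun t => by
    ext s
    simp only [indicator_apply, mem_Ioc, mem_Ico, sub_le_iff_le_add, and_comm, add_comm]
  calc ∫ s, F s * ν.real (Ioc s (s + ε))
      = ∫ s, ∫ t, (Ioc s (s + ε)).indicator (fun _ => F s) t ∂ν := by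
        simp only [integral_indicator_const _ measurableSet_Ioc, smul_eq_mul, mul_comm]
    _ = ∫ t, (∫ s, (Ioc s (s + ε)).indicator (fun _ => F s) t) ∂ν :=
        integral_integral_swap (f := fun s t => (Ioc s (s + ε)).indicator (fun _ => F s) t)
          (integrable_indicator_Ioc_fst hF hM)
    _ = ∫ t, (∫ s in t - ε..t, F s) ∂ν := by
        refine integral_congr_ae (ae_of_all _ fun t => ?_)
        simp only [hslice, integral_indicator measurableSet_Ico]
        rw [intervalIntegral.integral_of_le (sub_le_self _ hε), integral_Ico_eq_integral_Ioo,
          integral_Ioc_eq_integral_Ioo]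

theorem tendsto_integral_mul_measureReal_Ioc_div (hF : Measurable F) (hM : ∀ s, ‖F s‖ ≤ M)
    {fl : ℝ → ℝ} (hfl : ∀ᵐ t ∂ν, Tendsto F (𝓝[<] t) (𝓝 (fl t))) :
    Tendsto (fun ε => (∫ s, F s * ν.real (Ioc s (s + ε))) / ε) (𝓝[>] 0)
      (𝓝 (∫ t, fl t ∂ν)) := by
  have hF_int := hF.intervalIntegrable_of_norm_le hM
  have hcont : ∀ ε, Continuous fun t => ∫ s in t - ε..t, F s := fun ε => by
    have hprim := intervalIntegral.continuous_primitive hF_int 0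
    refine (hprim.sub (hprim.comp (continuous_sub_right ε))).congr fun t => ?_
    exact intervalIntegral.integral_interval_sub_left (hF_int 0 t) (hF_int 0 (t - ε))
  refine (tendsto_integral_filter_of_dominated_convergence (fun _ => M)
    (Eventually.of_forall fun ε => ((hcont ε).div_const ε).aestronglyMeasurable) ?_
    (integrable_const M) ?_).congr' ?_
  · filter_upwards [self_mem_nhdsWithin] with ε (hε : 0 < ε)
    refine ae_of_all _ fun t => ?_
    rw [norm_div, Real.norm_of_nonneg hε.le, div_le_iff₀ hε]
    simpa [abs_of_pos hε] using intervalIntegral.norm_integral_le_of_norm_le_const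
      (a := t - ε) (b := t) fun s _ => hM s
  · filter_upwards [hfl] with t ht
    exact tendsto_intervalIntegral_sub_div_nhdsGT hF_int
      hF.stronglyMeasurable.stronglyMeasurableAtFilter ht
  · filter_upwards [self_mem_nhdsWithin] with ε (hε : 0 < ε)
    rw [integral_div, integral_mul_measureReal_Ioc hF hM hε.le]

theorem StieltjesFunction.tendsto_integral_mul_measureReal_restrict_Ioc_div
    (g : StieltjesFunction ℝ) {a b : ℝ} (hF : Measurable F) (hM : ∀ s, ‖F s‖ ≤ M)
    {fl : ℝ → ℝ} (hfl : ∀ t ∈ Ioc a b, Tendsto F (𝓝[<] t) (𝓝 (fl t))) :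
    Tendsto (fun ε => (∫ s, F s * (g.measure.restrict (Ioc a b)).real (Ioc s (s + ε))) / ε)
      (𝓝[>] 0) (𝓝 (∫ t in Ioc a b, fl t ∂g.measure)) :=
  tendsto_integral_mul_measureReal_Ioc_div hF hM
    ((ae_restrict_iff' measurableSet_Ioc).2 (ae_of_all _ hfl))

end MeasureAverages

/-- `f_{J̄}` in the paper's notation. -/
noncomputable def extendZeroConst (a b : ℝ) (f : ℝ → ℝ) (s : ℝ) : ℝ :=
  if s < a then 0 else if s ≤ b then f s else f b

/-- `g_J` in the paper's notation. -/
noncomputable def extendConstZero (a b : ℝ) (g : ℝ → ℝ) (s : ℝ) : ℝ :=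
  if s < a then g a else if s ≤ b then g s else 0

section Extensions

variable {a b s : ℝ} {f g : ℝ → ℝ}

theorem extendZeroConst_of_lt_left (h : s < a) : extendZeroConst a b f s = 0 := if_pos h

theorem extendZeroConst_of_mem_Icc (h : s ∈ Icc a b) : extendZeroConst a b f s = f s := by
  rw [extendZeroConst, if_neg (not_lt.2 h.1), if_pos h.2]

theorem extendZeroConst_of_right_le (hab : a ≤ b) (h : b ≤ s) : extendZeroConst a b f s = f b := by
  rcases h.eq_or_lt with rfl | h
  · exact extendZeroConst_of_mem_Icc ⟨hab, le_rfl⟩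
  · rw [extendZeroConst, if_neg (not_lt.2 (hab.trans h.le)), if_neg (not_le.2 h)]

theorem norm_extendZeroConst_le (hab : a ≤ b) {M : ℝ} (hM : ∀ x ∈ Icc a b, ‖f x‖ ≤ M) (s : ℝ) :
    ‖extendZeroConst a b f s‖ ≤ M := by
  rcases lt_or_ge s a with hsa | hsa
  · rw [extendZeroConst_of_lt_left hsa, norm_zero]
    exact (norm_nonneg _).trans (hM a ⟨le_rfl, hab⟩)
  rcases le_or_gt s b with hsb | hsb
  · rw [extendZeroConst_of_mem_Icc ⟨hsa, hsb⟩]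
    exact hM s ⟨hsa, hsb⟩
  · rw [extendZeroConst_of_right_le hab hsb.le]
    exact hM b ⟨hab, le_rfl⟩

theorem tendsto_extendZeroConst_nhdsGE (hab : a ≤ b)
    (hf_rc : ∀ x ∈ Ico a b, Tendsto f (𝓝[≥] x) (𝓝 (f x))) (x : ℝ) :
    Tendsto (extendZeroConst a b f) (𝓝[≥] x) (𝓝 (extendZeroConst a b f x)) := by
  rcases lt_or_ge x a with hxa | hxa
  · rw [extendZeroConst_of_lt_left hxa]
    refine tendsto_const_nhds.congr' ?_
    filter_upwards [nhdsWithin_le_nhds (Iio_mem_nhds hxa)] with s hs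
    exact (extendZeroConst_of_lt_left hs).symm
  rcases lt_or_ge x b with hxb | hxb
  · rw [extendZeroConst_of_mem_Icc ⟨hxa, hxb.le⟩]
    refine (hf_rc x ⟨hxa, hxb⟩).congr' ?_
    filter_upwards [self_mem_nhdsWithin, nhdsWithin_le_nhds (Iio_mem_nhds hxb)]
      with s (hxs : x ≤ s) (hsb : s < b)
    exact (extendZeroConst_of_mem_Icc ⟨hxa.trans hxs, hsb.le⟩).symm
  · rw [extendZeroConst_of_right_le hab hxb]
    refine tendsto_const_nhds.congr' ?_
    filter_upwards [self_mem_nhdsWithin] with s (hxs : x ≤ s)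
    exact (extendZeroConst_of_right_le hab (hxb.trans hxs)).symm

theorem tendsto_extendZeroConst_nhdsLT {fl : ℝ → ℝ} {x : ℝ} (hx : x ∈ Ioc a b)
    (hf_ll : Tendsto f (𝓝[<] x) (𝓝 (fl x))) :
    Tendsto (extendZeroConst a b f) (𝓝[<] x) (𝓝 (fl x)) := by
  refine hf_ll.congr' ?_
  filter_upwards [Ioo_mem_nhdsLT hx.1] with s hs
  exact (extendZeroConst_of_mem_Icc ⟨hs.1.le, hs.2.le.trans hx.2⟩).symm

theorem extendConstZero_eq (hab : a ≤ b) (s : ℝ) :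
    extendConstZero a b g s = g (max a (min s b)) - if b < s then g b else 0 := by
  rcases lt_or_ge s a with hsa | hsa
  · rw [extendConstZero, if_pos hsa, if_neg (not_lt.2 (hsa.le.trans hab)),
      min_eq_left (hsa.le.trans hab), max_eq_left hsa.le, sub_zero]
  rcases le_or_gt s b with hsb | hsb
  · rw [extendConstZero, if_neg (not_lt.2 hsa), if_pos hsb, if_neg (not_lt.2 hsb),
      min_eq_left hsb, max_eq_right hsa, sub_zero]
  · rw [extendConstZero, if_neg (not_lt.2 hsa), if_neg (not_le.2 hsb), if_pos hsb,
      min_eq_right hsb.le, max_eq_right hab, sub_self]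

theorem extendConstZero_of_right_lt (hab : a ≤ b) (h : b < s) : extendConstZero a b g s = 0 := by
  rw [extendConstZero, if_neg (not_lt.2 (hab.trans h.le)), if_neg (not_le.2 h)]

theorem norm_extendConstZero_le (hab : a ≤ b) {M : ℝ} (hM : ∀ x ∈ Icc a b, ‖g x‖ ≤ M) (s : ℝ) :
    ‖extendConstZero a b g s‖ ≤ M := by
  rcases le_or_gt s b with hsb | hsb
  · rw [extendConstZero_eq hab, if_neg (not_lt.2 hsb), sub_zero]
    exact hM _ ⟨le_max_left _ _, max_le hab (min_le_right _ _)⟩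
  · rw [extendConstZero_of_right_lt hab hsb, norm_zero]
    exact (norm_nonneg _).trans (hM a ⟨le_rfl, hab⟩)

end Extensions

section StieltjesDifference

variable {a b ε : ℝ} {g : ℝ → ℝ} {g₁ g₂ : StieltjesFunction ℝ}

theorem extendConstZero_eq_sub (hab : a ≤ b) (hg : ∀ x ∈ Icc a b, g x = g₁ x - g₂ x) (s : ℝ) :
    extendConstZero a b g s =
      g₁ (max a (min s b)) - g₂ (max a (min s b)) - if b < s then g b else 0 := by
  rw [extendConstZero_eq hab, hg _ ⟨le_max_left _ _, max_le hab (min_le_right _ _)⟩]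

theorem measurable_extendConstZero (hab : a ≤ b) (hg : ∀ x ∈ Icc a b, g x = g₁ x - g₂ x) :
    Measurable (extendConstZero a b g) := by
  have hclamp : Measurable fun s : ℝ => max a (min s b) :=
    (continuous_const.max (continuous_id.min continuous_const)).measurable
  rw [funext (extendConstZero_eq_sub hab hg)]
  exact ((g₁.mono.measurable.comp hclamp).sub (g₂.mono.measurable.comp hclamp)).sub
    (Measurable.ite measurableSet_Ioi measurable_const measurable_const)

theorem extendConstZero_sub_extendConstZero_add (hab : a ≤ b)
    (hg : ∀ x ∈ Icc a b, g x = g₁ x - g₂ x) (hε : 0 ≤ ε) (s : ℝ) :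
    extendConstZero a b g s - extendConstZero a b g (s + ε) =
      (g₂.measure.restrict (Ioc a b)).real (Ioc s (s + ε)) -
        (g₁.measure.restrict (Ioc a b)).real (Ioc s (s + ε)) +
        (Ioc (b - ε) b).indicator (fun _ => g b) s := by
  have hs : s ≤ s + ε := le_add_of_nonneg_right hε
  rw [extendConstZero_eq_sub hab hg, extendConstZero_eq_sub hab hg,
    g₁.measureReal_restrict_Ioc a b hs, g₂.measureReal_restrict_Ioc a b hs, indicator_apply]
  split_ifs <;> grind

theorem integral_extendConstZero_mul_sub {F : ℝ → ℝ} {M : ℝ} (hab : a ≤ b)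
    (hg : ∀ x ∈ Icc a b, g x = g₁ x - g₂ x) (hF : Measurable F) (hM : ∀ s, ‖F s‖ ≤ M)
    (hF0 : ∀ s < a, F s = 0) (hε : 0 ≤ ε) :
    ∫ s, extendConstZero a b g s * (F s - F (s - ε)) =
      (∫ s, F s * (g₂.measure.restrict (Ioc a b)).real (Ioc s (s + ε))) -
        (∫ s, F s * (g₁.measure.restrict (Ioc a b)).real (Ioc s (s + ε))) +
        g b * ∫ s in b - ε..b, F s := by
  set G := extendConstZero a b g
  set C := max |g₁ a| |g₁ b| + max |g₂ a| |g₂ b|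
  have hG_bdd : ∀ s, ‖G s‖ ≤ C := norm_extendConstZero_le hab fun x hx => by
    rw [hg x hx, Real.norm_eq_abs]
    exact (abs_sub _ _).trans (add_le_add (abs_le_max_abs_abs (g₁.mono hx.1) (g₁.mono hx.2))
      (abs_le_max_abs_abs (g₂.mono hx.1) (g₂.mono hx.2)))
  have hGF : ∀ δ, 0 ≤ δ → Integrable fun s => G s * F (s - δ) := fun δ hδ => by
    refine ((measurable_extendConstZero hab hg).mul
      (hF.comp (measurable_id.sub_const δ))).integrable_of_norm_le_of_eqOn_compl_Icc
      (M := C * M) (c := a) (d := b) (fun s => ?_) fun s hs => ?_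
    · rw [norm_mul]
      exact mul_le_mul (hG_bdd s) (hM _) (norm_nonneg _) ((norm_nonneg _).trans (hG_bdd s))
    · rcases not_and_or.1 hs with hsa | hsb
      · simp [hF0 (s - δ) (by linarith [not_le.1 hsa])]
      · simp [G, extendConstZero_of_right_lt hab (not_le.1 hsb)]
  have hI : ∀ g' : StieltjesFunction ℝ,
      Integrable fun s => F s * (g'.measure.restrict (Ioc a b)).real (Ioc s (s + ε)) :=
    fun _ => integrable_mul_measureReal_Ioc hF hM
  have hF_end : Integrable fun s => g b * (Ioc (b - ε) b).indicator F s :=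
    ((hF.intervalIntegrable_of_norm_le hM (b - ε) b).1.integrable_indicator
      measurableSet_Ioc).const_mul (g b)
  calc ∫ s, G s * (F s - F (s - ε))
      = ∫ s, F s * (G s - G (s + ε)) :=
        integral_mul_sub_comp_sub ε (by simpa using hGF 0 le_rfl) (hGF ε hε)
    _ = ∫ s, (F s * (g₂.measure.restrict (Ioc a b)).real (Ioc s (s + ε)) -
          F s * (g₁.measure.restrict (Ioc a b)).real (Ioc s (s + ε))) +
          g b * (Ioc (b - ε) b).indicator F s := by
        refine integral_congr_ae (ae_of_all _ fun s => ?_)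
        simp only [G, extendConstZero_sub_extendConstZero_add hab hg hε, indicator_apply]
        split_ifs <;> ring
    _ = _ := by
        rw [integral_add ((hI g₂).sub' (hI g₁)) hF_end, integral_sub (hI g₂) (hI g₁),
          integral_const_mul, integral_indicator measurableSet_Ioc,
          intervalIntegral.integral_of_le (sub_le_self _ hε)]

end StieltjesDifference

/-- Integration by parts for the backward integral: if `f` is càdlàg on `[a,b]` (with left
limits `fl`) and `g` is of bounded variation (difference of Stieltjes functions on `[a,b]`),
then the backward integral `∫_{[a,b]} g d⁺f` exists and equals
`g(b)f(b⁻) − ∫_{]a,b]} f(s⁻) dg(s)`. -/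
theorem stmt3 (a b : ℝ) (hab : a < b) (f fl g : ℝ → ℝ)
    (g₁ g₂ : StieltjesFunction ℝ)
    (hg : ∀ x ∈ Set.Icc a b, g x = g₁ x - g₂ x)
    (hf_rc : ∀ x ∈ Set.Ico a b, Tendsto f (𝓝[≥] x) (𝓝 (f x)))
    (hf_ll : ∀ x ∈ Set.Ioc a b, Tendsto f (𝓝[<] x) (𝓝 (fl x))) :
    Tendsto
      (fun ε : ℝ => ∫ s : ℝ,
        (if s < a then g a else if s ≤ b then g s else 0) *
          ((if s < a then 0 else if s ≤ b then f s else f b) -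
            (if s - ε < a then 0 else if s - ε ≤ b then f (s - ε) else f b)) / ε)
      (𝓝[>] 0)
      (𝓝 (g b * fl b -
        ((∫ s in Set.Ioc a b, fl s ∂g₁.measure) -
          ∫ s in Set.Ioc a b, fl s ∂g₂.measure))) := by
  set F := extendZeroConst a b f
  have hF : Measurable F :=
    measurable_of_tendsto_nhdsWithin_Ici (tendsto_extendZeroConst_nhdsGE hab.le hf_rc)
  obtain ⟨M, hM⟩ := exists_norm_le_of_tendsto_nhdsGE_nhdsLT hf_rc hf_ll
  have hF_bdd : ∀ s, ‖F s‖ ≤ M := norm_extendZeroConst_le hab.le hM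
  have hF_ll : ∀ t ∈ Ioc a b, Tendsto F (𝓝[<] t) (𝓝 (fl t)) := fun t ht =>
    tendsto_extendZeroConst_nhdsLT ht (hf_ll t ht)
  have hF_end : Tendsto (fun ε => (∫ s in b - ε..b, F s) / ε) (𝓝[>] 0) (𝓝 (fl b)) :=
    tendsto_intervalIntegral_sub_div_nhdsGT (hF.intervalIntegrable_of_norm_le hF_bdd)
      hF.stronglyMeasurable.stronglyMeasurableAtFilter (hF_ll b ⟨hab, le_rfl⟩)
  rw [show ∀ x y z : ℝ, x - (y - z) = z - y + x from fun _ _ _ => by ring]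
  refine (((g₂.tendsto_integral_mul_measureReal_restrict_Ioc_div hF hF_bdd hF_ll).sub
    (g₁.tendsto_integral_mul_measureReal_restrict_Ioc_div hF hF_bdd hF_ll)).add
    (hF_end.const_mul (g b))).congr' ?_
  filter_upwards [self_mem_nhdsWithin] with ε (hε : 0 < ε)
  change _ = ∫ s, extendConstZero a b g s * (F s - F (s - ε)) / ε
  rw [integral_div, integral_extendConstZero_mul_sub hab.le hg hF hF_bdd
    (fun _ => extendZeroConst_of_lt_left) hε.le]
  ring
end
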